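/- Consider SEMO with uniform parent selection on OneMinMax. There is a constant c > 0 such that for all n, the expected number of iterations until the population covers the whole Pareto front is at least (n² ln n)/2 − c·n²; combined with the known upper bound O(n² log n), the expected time is Θ(n² log n). -/

import Mathlib

noncomputable section
open scoped ENNReal
attribute [local instance] Classical.propDecidable

namespace EMO


/-- A bit string of length `n`. -/
abbrev BitString (n : ℕ) := Fin n → Bool

/-- Number of one-bits. -/
def onesCount {n : ℕ} (x : BitString n) : ℕ :=
  (Finset.univ.filter fun i => x i = true).card

def allOnes (n : ℕ) : BitString n := fun _ => true
def allZeros (n : ℕ) : BitString n := fun _ => false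

/-- The bi-objective function OneMinMax. -/
def OneMinMax {n : ℕ} (x : BitString n) : ℤ × ℤ :=
  ((onesCount x : ℤ), (n : ℤ) - (onesCount x : ℤ))

/-- Number of leading ones. -/
def leadingOnes {n : ℕ} (x : BitString n) : ℕ :=
  (Finset.univ.filter fun i : Fin n => ∀ j : Fin n, j ≤ i → x j = true).card

/-- Number of trailing zeros. -/
def trailingZeros {n : ℕ} (x : BitString n) : ℕ :=
  (Finset.univ.filter fun i : Fin n => ∀ j : Fin n, i ≤ j → x j = false).card

/-- The bi-objective function LOTZ. -/
def LOTZ {n : ℕ} (x : BitString n) : ℤ × ℤ :=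
  ((leadingOnes x : ℤ), (trailingZeros x : ℤ))

/-- `y` dominates `x` (maximisation). -/
def dominates {n : ℕ} (f : BitString n → ℤ × ℤ) (y x : BitString n) : Prop :=
  (f x).1 ≤ (f y).1 ∧ (f x).2 ≤ (f y).2 ∧ f x ≠ f y

/-- `y` weakly dominates `x` (maximisation). -/
def weaklyDominates {n : ℕ} (f : BitString n → ℤ × ℤ) (y x : BitString n) : Prop :=
  (f x).1 ≤ (f y).1 ∧ (f x).2 ≤ (f y).2

/-- Pareto optimality. -/
def paretoOptimal {n : ℕ} (f : BitString n → ℤ × ℤ) (x : BitString n) : Prop :=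
  ¬ ∃ y : BitString n, dominates f y x

/-- A population of mutually non-dominated points. -/
def mutuallyNonDominated {n : ℕ} (f : BitString n → ℤ × ℤ)
    (P : Finset (BitString n)) : Prop :=
  ∀ x ∈ P, ∀ y ∈ P, ¬ dominates f y x

/-- Flip bit `i` of `x`. -/
def flipBit {n : ℕ} (x : BitString n) (i : Fin n) : BitString n :=
  Function.update x i (!x i)

/-- `y` is a Hamming neighbour of `x`. -/
def hammingNeighbour {n : ℕ} (x y : BitString n) : Prop :=
  ∃ i : Fin n, y = flipBit x i

/-- `x` is good relative to population `P`: it is Pareto optimal and has a Pareto-optimal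
Hamming neighbour whose objective vector is not attained by any member of `P`. -/
def isGood {n : ℕ} (f : BitString n → ℤ × ℤ) (P : Finset (BitString n))
    (x : BitString n) : Prop :=
  paretoOptimal f x ∧
    ∃ y : BitString n, hammingNeighbour x y ∧ paretoOptimal f y ∧ ∀ z ∈ P, f z ≠ f y

/-- `x` is bad relative to population `P`. -/
def isBad {n : ℕ} (f : BitString n → ℤ × ℤ) (P : Finset (BitString n))
    (x : BitString n) : Prop :=
  paretoOptimal f x ∧
    ¬ ∃ y : BitString n, hammingNeighbour x y ∧ paretoOptimal f y ∧ ∀ z ∈ P, f z ≠ f y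

/-- `P` covers the whole Pareto front of `f`. -/
def coversFront {n : ℕ} (f : BitString n → ℤ × ℤ) (P : Finset (BitString n)) : Prop :=
  ∀ x : BitString n, paretoOptimal f x → ∃ z ∈ P, f z = f x

/-- The hypervolume contribution of `x` to `P` (for a population of mutually
non-dominated points, with reference point `r`). -/
def HVC {n : ℕ} (f : BitString n → ℤ × ℤ) (r : ℤ × ℤ) (x : BitString n)
    (P : Finset (BitString n)) : ℤ :=
  ((f x).1 - (WithBot.unbotD r.1 ((P.filter fun z => (f z).1 < (f x).1).image fun z => (f z).1).max)) *
  ((f x).2 - (WithBot.unbotD r.2 ((P.filter fun z => (f z).2 < (f x).2).image fun z => (f z).2).max))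

/-- Crowding distance of `x` in `P` with respect to a single objective `g`: infinite for the
boundary points, and otherwise the normalised difference between successor and predecessor. -/
def CDCobj {n : ℕ} (g : BitString n → ℤ) (x : BitString n)
    (P : Finset (BitString n)) : ℝ≥0∞ :=
  if (∀ z ∈ P, g x ≤ g z) ∨ (∀ z ∈ P, g z ≤ g x) then ⊤
  else
    ((((WithTop.untopD 0 ((P.filter fun z => g x < g z).image g).min) -
        (WithBot.unbotD 0 ((P.filter fun z => g z < g x).image g).max)).toNat : ℝ≥0∞)) /
      ((((WithBot.unbotD 0 (P.image g).max) - (WithTop.untopD 0 (P.image g).min)).toNat : ℝ≥0∞))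

/-- The crowding distance contribution of `x` to `P`. -/
def CDC {n : ℕ} (f : BitString n → ℤ × ℤ) (x : BitString n)
    (P : Finset (BitString n)) : ℝ≥0∞ :=
  CDCobj (fun z => (f z).1) x P + CDCobj (fun z => (f z).2) x P

/-- A diversity measure `c` is diversity-favouring on `S`. -/
def diversityFavouring {n : ℕ} {α : Type*} [Preorder α] (f : BitString n → ℤ × ℤ)
    (c : BitString n → Finset (BitString n) → α) (S : Set (BitString n)) : Prop :=
  ∀ P : Finset (BitString n), mutuallyNonDominated f P →
    ∀ x ∈ P, ∀ y ∈ P, x ∈ S → y ∈ S → isBad f P x → isGood f P y → c x P < c y P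

/-- The default bit string (used only to make selection kernels total). -/
def defaultBS (n : ℕ) : BitString n := fun _ => false

/-- Local mutation: flip a single uniformly random bit. -/
def localMutation {n : ℕ} (hn : 0 < n) (x : BitString n) : PMF (BitString n) :=
  haveI : Nonempty (Fin n) := ⟨⟨0, hn⟩⟩
  (PMF.uniformOfFintype (Fin n)).map (flipBit x)

/-- A Bernoulli coin with success probability `1/n` (for `n ≥ 1`). -/
def bitFlipCoin (n : ℕ) : PMF Bool :=
  PMF.bernoulli (min ((n : ℝ≥0∞))⁻¹ 1).toNNReal
    (by simpa using ENNReal.toNNReal_mono ENNReal.one_ne_top (min_le_right ((n : ℝ≥0∞))⁻¹ 1))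

/-- Global (standard bit) mutation: flip each bit independently with probability `1/n`. -/
def globalMutationAux {n : ℕ} : List (Fin n) → BitString n → PMF (BitString n)
  | [], x => PMF.pure x
  | i :: is, x => (bitFlipCoin n).bind fun b =>
      globalMutationAux is (if b then flipBit x i else x)

def globalMutation {n : ℕ} (x : BitString n) : PMF (BitString n) :=
  globalMutationAux (List.finRange n) x

/-- Survival selection: if `s'` is not dominated by any member of `P`, add `s'` to `P` and
remove all members weakly dominated by `s'`. -/
def updatePop {n : ℕ} (f : BitString n → ℤ × ℤ) (P : Finset (BitString n))
    (s' : BitString n) : Finset (BitString n) :=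
  if ∃ z ∈ P, dominates f z s' then P
  else insert s' (P.filter fun z => ¬ weaklyDominates f s' z)

/-- One iteration of (G)SEMO with parent-selection kernel `select` and mutation `mutate`. -/
def step {n : ℕ} (f : BitString n → ℤ × ℤ)
    (select : Finset (BitString n) → PMF (BitString n))
    (mutate : BitString n → PMF (BitString n))
    (P : Finset (BitString n)) : PMF (Finset (BitString n)) :=
  (select P).bind fun s => (mutate s).map fun s' => updatePop f P s'

/-- The L-dominant attribute `L(x) = LO(x) + TZ(x)`. -/
def Ldom {n : ℕ} (x : BitString n) : ℕ := leadingOnes x + trailingZeros x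

/-- The subpopulation of points with maximum L-dominant attribute. -/
def maxLSub {n : ℕ} (P : Finset (BitString n)) : Finset (BitString n) :=
  P.filter fun x => ∀ z ∈ P, Ldom z ≤ Ldom x

/-- One iteration of the modified GSEMO: parent selection (and the diversity contribution)
is restricted to the subpopulation of points with maximum L-dominant attribute. -/
def stepMod {n : ℕ} (f : BitString n → ℤ × ℤ)
    (select : Finset (BitString n) → PMF (BitString n))
    (mutate : BitString n → PMF (BitString n))
    (P : Finset (BitString n)) : PMF (Finset (BitString n)) :=
  (select (maxLSub P)).bind fun s => (mutate s).map fun s' => updatePop f P s'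

/-- Initial population: a single uniformly random bit string. -/
def initDist (n : ℕ) : PMF (Finset (BitString n)) :=
  (PMF.uniformOfFintype (BitString n)).map fun x => {x}

/-- Distribution of the population after `t` iterations. -/
def stateDist {S : Type*} (init : PMF S) (st : S → PMF S) : ℕ → PMF S
  | 0 => init
  | t + 1 => (stateDist init st t).bind st

/-- Expected number of iterations until an (absorbing) goal predicate is reached,
expressed as `∑ₜ Pr[goal not yet reached at time t]`. -/
def expectedRuntime {S : Type*} (init : PMF S) (st : S → PMF S) (goal : S → Prop) : ℝ≥0∞ :=
  ∑' t : ℕ, (stateDist init st t).toOuterMeasure {s | ¬ goal s}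

/-- Uniform parent selection. -/
def uniformSelect {n : ℕ} (P : Finset (BitString n)) : PMF (BitString n) :=
  if h : P.Nonempty then PMF.uniformOfFinset P h else PMF.pure (defaultBS n)

/-- Highest Diversity Contribution (HDC) parent selection: select an individual with
maximum diversity contribution, ties broken uniformly at random. -/
def HDCSelect {n : ℕ} {α : Type*} [LinearOrder α]
    (c : BitString n → Finset (BitString n) → α)
    (P : Finset (BitString n)) : PMF (BitString n) :=
  if h : P.Nonempty then
    PMF.uniformOfFinset (P.filter fun x => ∀ y ∈ P, c y P ≤ c x P)
      (by
        obtain ⟨b, hb, hmax⟩ := P.exists_max_image (fun x => c x P) h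
        exact ⟨b, Finset.mem_filter.mpr ⟨hb, hmax⟩⟩)
  else PMF.pure (defaultBS n)

/-- Non-Minimum Uniform at Random (NMUAR) parent selection: select uniformly at random
among all individuals whose diversity contribution is not minimal (from the whole
population if all contributions are equal). -/
def NMUARSelect {n : ℕ} {α : Type*} [LinearOrder α]
    (c : BitString n → Finset (BitString n) → α)
    (P : Finset (BitString n)) : PMF (BitString n) :=
  if h : P.Nonempty then
    if hQ : (P.filter fun x => ∃ y ∈ P, c y P < c x P).Nonempty then
      PMF.uniformOfFinset _ hQ
    else PMF.uniformOfFinset P h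
  else PMF.pure (defaultBS n)

/-- Tournament selection with tournament size `μ = |P|`: draw `μ` individuals uniformly at
random with replacement from `P` and select one with the highest diversity contribution
among the drawn multiset (ties broken uniformly at random). -/
def tournamentSelect {n : ℕ} {α : Type*} [LinearOrder α]
    (c : BitString n → Finset (BitString n) → α)
    (P : Finset (BitString n)) : PMF (BitString n) :=
  if h : P.Nonempty then
    haveI : Nonempty {x // x ∈ P} := h.to_subtype
    (PMF.uniformOfFintype (Fin P.card → {x // x ∈ P})).bind fun g =>
      PMF.uniformOfFinset
        ((Finset.univ.image fun i => ((g i : {x // x ∈ P}) : BitString n)).filter fun x =>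
          ∀ y ∈ Finset.univ.image fun i => ((g i : {x // x ∈ P}) : BitString n), c y P ≤ c x P)
        (by
          have hne : (Finset.univ.image fun i => ((g i : {x // x ∈ P}) : BitString n)).Nonempty := by
            refine ⟨(g ⟨0, Finset.card_pos.mpr h⟩ : {x // x ∈ P}), ?_⟩
            exact Finset.mem_image.mpr ⟨⟨0, Finset.card_pos.mpr h⟩, Finset.mem_univ _, rfl⟩
          obtain ⟨b, hb, hmax⟩ :=
            Finset.exists_max_image _ (fun x => c x P) hne
          exact ⟨b, Finset.mem_filter.mpr ⟨hb, hmax⟩⟩)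
  else PMF.pure (defaultBS n)

/-- Exponential ranking scheme: probability of selecting the `i`-th ranked individual
(1-indexed) in a population of size `μ`. -/
def rExp (i μ : ℕ) : ℝ≥0∞ :=
  (2 : ℝ≥0∞)⁻¹ ^ i / ∑ j ∈ Finset.Icc 1 μ, (2 : ℝ≥0∞)⁻¹ ^ j

/-- Power-law ranking scheme. -/
def rPow (i μ : ℕ) : ℝ≥0∞ :=
  ((i : ℝ≥0∞) ^ 2)⁻¹ / ∑ j ∈ Finset.Icc 1 μ, ((j : ℝ≥0∞) ^ 2)⁻¹

/-- Harmonic ranking scheme. -/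
def rHarm (i μ : ℕ) : ℝ≥0∞ :=
  (i : ℝ≥0∞)⁻¹ / ∑ j ∈ Finset.Icc 1 μ, (j : ℝ≥0∞)⁻¹


/-- `select` implements a rank-based parent-selection scheme with rank probabilities
`r i μ` (1-indexed rank `i`, population size `μ`) with respect to the diversity
contribution `c`, for some non-increasing ordering of the population by `c`. -/
def implementsRankScheme {n : ℕ} {α : Type*} [Preorder α]
    (c : BitString n → Finset (BitString n) → α) (r : ℕ → ℕ → ℝ≥0∞)
    (select : Finset (BitString n) → PMF (BitString n)) : Prop :=
  ∀ P : Finset (BitString n), P.Nonempty →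
    ∃ l : List (BitString n), l.Nodup ∧ l.toFinset = P ∧
      l.Chain' (fun a b => c b P ≤ c a P) ∧
      (∀ i : Fin l.length, select P (l.get i) = r (i.val + 1) P.card) ∧
      (∀ x : BitString n, x ∉ P → select P x = 0)

/-- The Pareto-optimal point `1^i 0^(n-i)` of LOTZ. -/
def opt (n i : ℕ) : BitString n := fun t => decide ((t : ℕ) < i)

/-- The whole Pareto set of LOTZ as a population. -/
def frontSet (n : ℕ) : Finset (BitString n) := (Finset.range (n + 1)).image (opt n)

/-- `P` has a gap at position `i`. -/
def hasGapAt {n : ℕ} (P : Finset (BitString n)) (i : ℕ) : Prop :=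
  opt n i ∉ P ∧ (∃ j, j < i ∧ opt n j ∈ P) ∧ (∃ k, i < k ∧ k ≤ n ∧ opt n k ∈ P)

/-- `P` has a gap at some position `i` with `n/4 ≤ i ≤ 3n/4`. -/
def gapInRange (n : ℕ) (P : Finset (BitString n)) : Prop :=
  ∃ i : ℕ, n ≤ 4 * i ∧ 4 * i ≤ 3 * n ∧ hasGapAt P i

/-- `P` contains both `0^n` and `1^n`. -/
def bothExtremes (n : ℕ) (P : Finset (BitString n)) : Prop :=
  allZeros n ∈ P ∧ allOnes n ∈ P

/-- The chain stopped (frozen) as soon as `cond` holds. -/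
def stopWhen {S : Type*} (cond : S → Prop) (st : S → PMF S) (s : S) : PMF S :=
  if cond s then PMF.pure s else st s

/-!
On OneMinMax every point is Pareto-optimal, so SEMO's population always holds exactly one point
for each number of ones in an interval `[a, b]`, and a step changes the interval only by lowering
`a` or raising `b` by one: the parent must be an extreme point and the flipped bit must point
outwards. Both bounds are additive-drift arguments for potentials of `(a, b)`. Lowering `a`
costs `n (b + 1 - a) / a` steps in expectation while `b` only grows, so
`n ∑_{i ≤ a} (b + 1 - i) / i` drops by at most 1 per step; by Jensen's inequality its average
over the uniform initial point is at least `n² ln n / 2 - n²`. Since the population never has more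
than `n + 1` points, `n (n + 1) (H_a + H_{n-b})` drops by at least 1 per step until the front is
covered, which gives `O(n² log n)`.
-/

end EMO

namespace PMF

variable {α β : Type*}

def lexpect (p : PMF α) (f : α → ℝ≥0∞) : ℝ≥0∞ := ∑' a, p a * f a

lemma lexpect_pure (a : α) (f : α → ℝ≥0∞) : (PMF.pure a).lexpect f = f a := by
  rw [lexpect, tsum_eq_single a fun b hb => by simp [hb]]
  simp

lemma lexpect_bind (p : PMF α) (q : α → PMF β) (f : β → ℝ≥0∞) :
    (p.bind q).lexpect f = p.lexpect fun a => (q a).lexpect f := by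
  simp only [lexpect, bind_apply, ← ENNReal.tsum_mul_right, ← ENNReal.tsum_mul_left]
  rw [ENNReal.tsum_comm]
  simp only [mul_assoc]

lemma lexpect_map (p : PMF α) (g : α → β) (f : β → ℝ≥0∞) :
    (p.map g).lexpect f = p.lexpect (f ∘ g) := by
  simp only [map, lexpect_bind, Function.comp_apply, lexpect_pure]
  rfl

lemma lexpect_mono {p : PMF α} {f g : α → ℝ≥0∞} (h : ∀ a ∈ p.support, f a ≤ g a) :
    p.lexpect f ≤ p.lexpect g := by
  refine ENNReal.tsum_le_tsum fun a => ?_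
  by_cases ha : a ∈ p.support
  · exact mul_le_mul_right (h a ha) _
  · simp [(p.apply_eq_zero_iff a).mpr ha]

lemma lexpect_const (p : PMF α) (c : ℝ≥0∞) : p.lexpect (fun _ => c) = c := by
  rw [lexpect, ENNReal.tsum_mul_right, tsum_coe, one_mul]

lemma lexpect_le_of_le {p : PMF α} {f : α → ℝ≥0∞} {c : ℝ≥0∞}
    (h : ∀ a ∈ p.support, f a ≤ c) : p.lexpect f ≤ c :=
  (lexpect_mono h).trans_eq (lexpect_const p c)

lemma lexpect_add (p : PMF α) (f g : α → ℝ≥0∞) :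
    p.lexpect (fun a => f a + g a) = p.lexpect f + p.lexpect g := by
  simp only [lexpect, mul_add, ENNReal.tsum_add]

lemma lexpect_const_mul (p : PMF α) (c : ℝ≥0∞) (f : α → ℝ≥0∞) :
    p.lexpect (fun a => c * f a) = c * p.lexpect f := by
  simp only [lexpect, ← ENNReal.tsum_mul_left, mul_left_comm]

lemma lexpect_uniformOfFinset (s : Finset α) (hs : s.Nonempty) (f : α → ℝ≥0∞) :
    (uniformOfFinset s hs).lexpect f = (s.card : ℝ≥0∞)⁻¹ * ∑ a ∈ s, f a := by
  rw [lexpect, tsum_eq_sum (s := s) fun a ha => by simp [uniformOfFinset_apply, ha],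
    Finset.mul_sum]
  exact Finset.sum_congr rfl fun a ha => by rw [uniformOfFinset_apply, if_pos ha]

lemma toOuterMeasure_eq_lexpect (p : PMF α) (s : Set α) :
    p.toOuterMeasure s = p.lexpect (s.indicator 1) := by
  rw [toOuterMeasure_apply, lexpect]
  congr 1; ext a
  by_cases ha : a ∈ s <;> simp [ha]

end PMF

section Averaging

variable {ι : Type*} {T : Finset ι} {F w : ι → ℝ≥0∞} {A : ℝ≥0∞}

lemma le_inv_card_mul_sum_add_one (hT : T.Nonempty) (h : ∀ p ∈ T, A ≤ F p + w p)
    (hw : ∑ p ∈ T, w p ≤ T.card) :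
    A ≤ (T.card : ℝ≥0∞)⁻¹ * ∑ p ∈ T, F p + 1 := by
  have hc : (T.card : ℝ≥0∞) ≠ 0 := by simpa using hT.ne_empty
  calc A = (T.card : ℝ≥0∞)⁻¹ * (T.card * A) := by
        rw [← mul_assoc, ENNReal.inv_mul_cancel hc (ENNReal.natCast_ne_top _), one_mul]
    _ ≤ (T.card : ℝ≥0∞)⁻¹ * (∑ p ∈ T, F p + T.card) := by
        gcongr
        calc (T.card : ℝ≥0∞) * A = ∑ p ∈ T, A := by rw [Finset.sum_const, nsmul_eq_mul]
          _ ≤ ∑ p ∈ T, (F p + w p) := Finset.sum_le_sum h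
          _ ≤ ∑ p ∈ T, F p + T.card := by rw [Finset.sum_add_distrib]; gcongr
    _ = (T.card : ℝ≥0∞)⁻¹ * ∑ p ∈ T, F p + 1 := by
        rw [mul_add, ENNReal.inv_mul_cancel hc (ENNReal.natCast_ne_top _)]

lemma inv_card_mul_sum_add_one_le (hT : T.Nonempty) (h : ∀ p ∈ T, F p + w p ≤ A)
    (hw : (T.card : ℝ≥0∞) ≤ ∑ p ∈ T, w p) :
    (T.card : ℝ≥0∞)⁻¹ * ∑ p ∈ T, F p + 1 ≤ A := by
  have hc : (T.card : ℝ≥0∞) ≠ 0 := by simpa using hT.ne_empty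
  calc (T.card : ℝ≥0∞)⁻¹ * ∑ p ∈ T, F p + 1
      = (T.card : ℝ≥0∞)⁻¹ * (∑ p ∈ T, F p + T.card) := by
        rw [mul_add, ENNReal.inv_mul_cancel hc (ENNReal.natCast_ne_top _)]
    _ ≤ (T.card : ℝ≥0∞)⁻¹ * (T.card * A) := by
        gcongr
        calc ∑ p ∈ T, F p + T.card ≤ ∑ p ∈ T, (F p + w p) := by
              rw [Finset.sum_add_distrib]; gcongr
          _ ≤ ∑ p ∈ T, A := Finset.sum_le_sum h
          _ = T.card * A := by rw [Finset.sum_const, nsmul_eq_mul]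
    _ = A := by rw [← mul_assoc, ENNReal.inv_mul_cancel hc (ENNReal.natCast_ne_top _), one_mul]

end Averaging


namespace EMO

section AdditiveDrift

variable {S : Type*} {init : PMF S} {st : S → PMF S} {goal I : S → Prop}

lemma forall_mem_support_stateDist (h0 : ∀ s ∈ init.support, I s)
    (hst : ∀ s, I s → ∀ s' ∈ (st s).support, I s') (t : ℕ) :
    ∀ s ∈ (stateDist init st t).support, I s := by
  induction t with
  | zero => exact h0
  | succ t ih =>
    intro s hs
    obtain ⟨s₀, hs₀, hs⟩ := (PMF.mem_support_bind_iff _ _ _).mp hs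
    exact hst s₀ (ih s₀ hs₀) s hs

lemma expectedRuntime_eq_tsum_lexpect :
    expectedRuntime init st goal =
      ∑' t, (stateDist init st t).lexpect ({s | ¬ goal s}.indicator 1) := by
  simp only [expectedRuntime, PMF.toOuterMeasure_eq_lexpect]

theorem expectedRuntime_le_of_drift (h0 : ∀ s ∈ init.support, I s)
    (hst : ∀ s, I s → ∀ s' ∈ (st s).support, I s') (h : S → ℝ≥0∞)
    (hmono : ∀ s, I s → goal s → (st s).lexpect h ≤ h s)
    (hdrift : ∀ s, I s → ¬ goal s → (st s).lexpect h + 1 ≤ h s) :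
    expectedRuntime init st goal ≤ init.lexpect h := by
  set μ := stateDist init st
  set u := fun t => (μ t).lexpect ({s | ¬ goal s}.indicator 1)
  have hstep (t : ℕ) : (μ (t + 1)).lexpect h + u t ≤ (μ t).lexpect h := by
    rw [show μ (t + 1) = (μ t).bind st from rfl, PMF.lexpect_bind, ← PMF.lexpect_add]
    refine PMF.lexpect_mono fun s hs => ?_
    have hs := forall_mem_support_stateDist h0 hst t s hs
    by_cases hg : goal s
    · simpa [hg] using hmono s hs hg
    · simpa [hg] using hdrift s hs hg
  have hpartial (T : ℕ) :
      ∑ t ∈ Finset.range T, u t + (μ T).lexpect h ≤ init.lexpect h := by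
    induction T with
    | zero => simp [μ, stateDist]
    | succ T ih =>
      calc ∑ t ∈ Finset.range (T + 1), u t + (μ (T + 1)).lexpect h
          = ∑ t ∈ Finset.range T, u t + ((μ (T + 1)).lexpect h + u T) := by
            rw [Finset.sum_range_succ]; ring
        _ ≤ init.lexpect h := (add_le_add_right (hstep T) _).trans ih
  rw [expectedRuntime_eq_tsum_lexpect, ENNReal.tsum_eq_iSup_nat]
  exact iSup_le fun T => le_self_add.trans (hpartial T)

theorem lexpect_le_expectedRuntime_of_drift (h0 : ∀ s ∈ init.support, I s)
    (hst : ∀ s, I s → ∀ s' ∈ (st s).support, I s') (g : S → ℝ≥0∞) {G : ℝ≥0∞}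
    (hG : G ≠ ⊤)    (hle : ∀ s, I s → g s ≤ G) (hgoal : ∀ s, I s → goal s → g s = 0)
    (hdrift : ∀ s, I s → ¬ goal s → g s ≤ (st s).lexpect g + 1) :
    init.lexpect g ≤ expectedRuntime init st goal := by
  set μ := stateDist init st
  set u := fun t => (μ t).lexpect ({s | ¬ goal s}.indicator 1)
  have hstep (t : ℕ) : (μ t).lexpect g ≤ (μ (t + 1)).lexpect g + u t := by
    rw [show μ (t + 1) = (μ t).bind st from rfl, PMF.lexpect_bind, ← PMF.lexpect_add]
    refine PMF.lexpect_mono fun s hs => ?_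
    have hs := forall_mem_support_stateDist h0 hst t s hs
    by_cases hg : goal s
    · simp [hgoal s hs hg]
    · simpa [hg] using hdrift s hs hg
  have hpartial (T : ℕ) :
      init.lexpect g ≤ (μ T).lexpect g + ∑ t ∈ Finset.range T, u t := by
    induction T with
    | zero => simp [μ, stateDist]
    | succ T ih =>
      calc init.lexpect g ≤ (μ (T + 1)).lexpect g + u T + ∑ t ∈ Finset.range T, u t :=
            ih.trans (add_le_add_left (hstep T) _)
        _ = (μ (T + 1)).lexpect g + ∑ t ∈ Finset.range (T + 1), u t := by
            rw [Finset.sum_range_succ]; ring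
  have hbound (T : ℕ) : (μ T).lexpect g ≤ G * u T := by
    rw [← PMF.lexpect_const_mul]
    refine PMF.lexpect_mono fun s hs => ?_
    have hs := forall_mem_support_stateDist h0 hst T s hs
    by_cases hg : goal s
    · simp [hgoal s hs hg]
    · simpa [hg] using hle s hs
  rw [expectedRuntime_eq_tsum_lexpect]
  by_cases htop : ∑' t, u t = ⊤
  · exact htop ▸ le_top
  have hlim : Filter.Tendsto (fun T => G * u T + ∑' t, u t) Filter.atTop
      (nhds (G * 0 + ∑' t, u t)) :=
    (ENNReal.Tendsto.const_mul (ENNReal.tendsto_atTop_zero_of_tsum_ne_top htop)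
      (Or.inr hG)).add_const _
  rw [mul_zero, zero_add] at hlim
  exact ge_of_tendsto' hlim fun T =>
    (hpartial T).trans (add_le_add (hbound T) (ENNReal.sum_le_tsum _))

end AdditiveDrift

variable {n : ℕ}

def moves (P : Finset (BitString n)) : Finset (BitString n × Fin n) := P ×ˢ Finset.univ

section Semo

variable (hn : 0 < n) (f : BitString n → ℤ × ℤ) {P : Finset (BitString n)}

lemma lexpect_step_uniformSelect_localMutation (hP : P.Nonempty)
    (F : Finset (BitString n) → ℝ≥0∞) :
    (step f uniformSelect (localMutation hn) P).lexpect F =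
      ((moves P).card : ℝ≥0∞)⁻¹ *
        ∑ p ∈ moves P, F (updatePop f P (flipBit p.1 p.2)) := by
  have : Nonempty (Fin n) := ⟨⟨0, hn⟩⟩
  rw [step, PMF.lexpect_bind, uniformSelect, dif_pos hP, PMF.lexpect_uniformOfFinset, moves,
    Finset.sum_product, Finset.card_product, Nat.cast_mul,
    ENNReal.mul_inv (Or.inr (ENNReal.natCast_ne_top _)) (Or.inl (ENNReal.natCast_ne_top _)),
    mul_assoc]
  congr 1
  rw [Finset.mul_sum]
  refine Finset.sum_congr rfl fun x _ => ?_
  rw [PMF.lexpect_map, localMutation, PMF.lexpect_map, PMF.uniformOfFintype,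
    PMF.lexpect_uniformOfFinset]
  rfl

lemma exists_eq_updatePop_of_mem_support_step (hP : P.Nonempty) {Q : Finset (BitString n)}
    (hQ : Q ∈ (step f uniformSelect (localMutation hn) P).support) :
    ∃ x ∈ P, ∃ i, Q = updatePop f P (flipBit x i) := by
  have : Nonempty (Fin n) := ⟨⟨0, hn⟩⟩
  simp only [step, uniformSelect, dif_pos hP, localMutation, PMF.mem_support_bind_iff,
    PMF.support_uniformOfFinset, PMF.support_map, PMF.support_uniformOfFintype] at hQ
  obtain ⟨x, hx, _, ⟨i, -, rfl⟩, rfl⟩ := hQ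
  exact ⟨x, hx, i, rfl⟩

end Semo

section OneMinMax

variable {x y : BitString n} {i : Fin n} {P : Finset (BitString n)} {a b : ℕ}

lemma onesCount_le (x : BitString n) : onesCount x ≤ n :=
  (Finset.card_filter_le _ _).trans_eq (Finset.card_fin n)

lemma onesCount_add_card_false (x : BitString n) :
    onesCount x + (Finset.univ.filter fun i => x i = false).card = n := by
  unfold onesCount
  simpa using Finset.card_filter_add_card_filter_not (s := Finset.univ) fun i => x i = true

lemma onesCount_flipBit_of_true (h : x i = true) : onesCount (flipBit x i) + 1 = onesCount x := by
  have : (Finset.univ.filter fun j => flipBit x i j = true) =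
      (Finset.univ.filter fun j => x j = true).erase i := by
    ext j
    by_cases hj : j = i <;> simp [flipBit, Function.update, hj, h]
  rw [onesCount, this, Finset.card_erase_add_one (by simp [h]), onesCount]

lemma onesCount_flipBit_of_false (h : x i = false) :
    onesCount (flipBit x i) = onesCount x + 1 := by
  have : (Finset.univ.filter fun j => flipBit x i j = true) =
      insert i (Finset.univ.filter fun j => x j = true) := by
    ext j
    by_cases hj : j = i <;> simp [flipBit, Function.update, hj, h]
  rw [onesCount, this, Finset.card_insert_of_notMem (by simp [h]), onesCount]

lemma oneMinMax_eq_iff : OneMinMax x = OneMinMax y ↔ onesCount x = onesCount y := by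
  simp [OneMinMax]

lemma not_dominates_oneMinMax (y x : BitString n) : ¬ dominates OneMinMax y x := by
  rintro ⟨h1, h2, hne⟩
  simp only [OneMinMax] at h1 h2 hne
  exact hne (by rw [show (onesCount x : ℤ) = onesCount y by omega])

lemma updatePop_oneMinMax (P : Finset (BitString n)) (s : BitString n) :
    updatePop OneMinMax P s = insert s (P.filter fun z => onesCount z ≠ onesCount s) := by
  rw [updatePop, if_neg fun ⟨z, _, hz⟩ => not_dominates_oneMinMax z s hz]
  congr 1
  refine Finset.filter_congr fun z _ => ?_
  simp only [weaklyDominates, OneMinMax]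
  omega

lemma image_onesCount_updatePop_oneMinMax (P : Finset (BitString n)) (s : BitString n) :
    (updatePop OneMinMax P s).image onesCount = insert (onesCount s) (P.image onesCount) := by
  ext k
  simp only [updatePop_oneMinMax, Finset.mem_image, Finset.mem_insert, Finset.mem_filter]
  constructor
  · rintro ⟨z, rfl | ⟨hz, -⟩, rfl⟩
    exacts [Or.inl rfl, Or.inr ⟨z, hz, rfl⟩]
  · rintro (rfl | ⟨z, hz, rfl⟩)
    · exact ⟨s, Or.inl rfl, rfl⟩
    · by_cases hc : onesCount z = onesCount s
      · exact ⟨s, Or.inl rfl, hc.symm⟩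
      · exact ⟨z, Or.inr ⟨hz, hc⟩, rfl⟩

lemma injOn_onesCount_updatePop_oneMinMax (h : Set.InjOn onesCount (P : Set (BitString n)))
    (s : BitString n) : Set.InjOn onesCount (updatePop OneMinMax P s : Set (BitString n)) := by
  rw [updatePop_oneMinMax]
  intro z hz w hw hzw
  simp only [Finset.coe_insert, Set.mem_insert_iff, Finset.coe_filter, Set.mem_ofPred_eq] at hz hw
  rcases hz with rfl | ⟨hzP, hzc⟩ <;> rcases hw with rfl | ⟨hwP, hwc⟩
  exacts [rfl, absurd hzw.symm hwc, absurd hzw hzc, h hzP hwP hzw]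

structure IsOnesInterval (P : Finset (BitString n)) (a b : ℕ) : Prop where
  injOn : Set.InjOn onesCount (P : Set (BitString n))
  image_eq : P.image onesCount = Finset.Icc a b
  le : a ≤ b

def minOnes (P : Finset (BitString n)) : ℕ := sInf (onesCount '' (P : Set (BitString n)))

def maxOnes (P : Finset (BitString n)) : ℕ := sSup (onesCount '' (P : Set (BitString n)))

lemma isOnesInterval_singleton (x : BitString n) :
    IsOnesInterval {x} (onesCount x) (onesCount x) where
  injOn := by simp
  image_eq := by simp
  le := le_rfl

namespace IsOnesInterval

variable (hP : IsOnesInterval P a b)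
include hP

lemma onesCount_mem (hx : x ∈ P) : onesCount x ∈ Finset.Icc a b :=
  hP.image_eq ▸ Finset.mem_image_of_mem _ hx

lemma exists_onesCount_eq {k : ℕ} (hk : k ∈ Finset.Icc a b) : ∃ x ∈ P, onesCount x = k :=
  Finset.mem_image.mp (hP.image_eq ▸ hk)

lemma nonempty : P.Nonempty :=
  let ⟨x, hx, _⟩ := hP.exists_onesCount_eq (Finset.left_mem_Icc.mpr hP.le)
  ⟨x, hx⟩

lemma le_n : b ≤ n := by
  obtain ⟨x, -, hx⟩ := hP.exists_onesCount_eq (Finset.right_mem_Icc.mpr hP.le)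
  exact hx ▸ onesCount_le x

lemma card_eq : P.card = b + 1 - a := by
  rw [← Finset.card_image_of_injOn hP.injOn, hP.image_eq, Nat.card_Icc]

lemma minOnes_eq : minOnes P = a := by
  rw [minOnes, ← Finset.coe_image, hP.image_eq, Finset.coe_Icc, csInf_Icc hP.le]

lemma maxOnes_eq : maxOnes P = b := by
  rw [maxOnes, ← Finset.coe_image, hP.image_eq, Finset.coe_Icc, csSup_Icc hP.le]

lemma coversFront_iff : coversFront OneMinMax P ↔ a = 0 ∧ b = n := by
  have hb := hP.le_n
  constructor
  · intro h
    have hmem (z : BitString n) : onesCount z ∈ Finset.Icc a b := by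
      obtain ⟨w, hw, hwz⟩ := h z fun ⟨y, hy⟩ => not_dominates_oneMinMax y z hy
      exact oneMinMax_eq_iff.mp hwz ▸ hP.onesCount_mem hw
    have h0 := hmem (allZeros n)
    have h1 := hmem (allOnes n)
    simp [onesCount, allZeros, allOnes] at h0 h1
    omega
  · rintro ⟨rfl, rfl⟩ z -
    obtain ⟨w, hw, hwz⟩ :=
      hP.exists_onesCount_eq (Finset.mem_Icc.mpr ⟨Nat.zero_le _, onesCount_le z⟩)
    exact ⟨w, hw, oneMinMax_eq_iff.mpr hwz⟩

lemma updatePop_flipBit (hx : x ∈ P) (i : Fin n) :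
    IsOnesInterval (updatePop OneMinMax P (flipBit x i))
      (min a (onesCount (flipBit x i))) (max b (onesCount (flipBit x i))) where
  injOn := injOn_onesCount_updatePop_oneMinMax hP.injOn _
  image_eq := by
    have hx := Finset.mem_Icc.mp (hP.onesCount_mem hx)
    have hv : a ≤ onesCount (flipBit x i) + 1 ∧ onesCount (flipBit x i) ≤ b + 1 := by
      cases hxi : x i
      · have := onesCount_flipBit_of_false hxi; omega
      · have := onesCount_flipBit_of_true hxi; omega
    rw [image_onesCount_updatePop_oneMinMax, hP.image_eq]
    ext k
    simp only [Finset.mem_insert, Finset.mem_Icc]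
    omega
  le := (min_le_left _ _).trans (hP.le.trans (le_max_left _ _))

end IsOnesInterval

lemma exists_isOnesInterval_of_mem_support_initDist (hP : P ∈ (initDist n).support) :
    ∃ a b, IsOnesInterval P a b := by
  obtain ⟨x, -, rfl⟩ := (PMF.mem_support_map_iff _ _ _).mp hP
  exact ⟨_, _, isOnesInterval_singleton x⟩

lemma exists_isOnesInterval_of_mem_support_step (hn : 0 < n) (hP : IsOnesInterval P a b)
    {Q : Finset (BitString n)}
    (hQ : Q ∈ (step OneMinMax uniformSelect (localMutation hn) P).support) :
    ∃ a b, IsOnesInterval Q a b := by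
  obtain ⟨x, hx, i, rfl⟩ := exists_eq_updatePop_of_mem_support_step hn _ hP.nonempty hQ
  exact ⟨_, _, hP.updatePop_flipBit hx i⟩

end OneMinMax

section Potentials

def lowerPot (n a b : ℕ) : ℝ≥0∞ :=
  n * ∑ i ∈ Finset.Icc 1 a, ((b + 1 - i : ℕ) : ℝ≥0∞) / i

def upperPot (n a b : ℕ) : ℝ≥0∞ :=
  ((n * (n + 1) : ℕ) : ℝ≥0∞) *
    (∑ i ∈ Finset.Icc 1 a, (i : ℝ≥0∞)⁻¹ +
      ∑ i ∈ Finset.Icc 1 (n - b), (i : ℝ≥0∞)⁻¹)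

def lowerPotential (P : Finset (BitString n)) : ℝ≥0∞ := lowerPot n (minOnes P) (maxOnes P)

def upperPotential (P : Finset (BitString n)) : ℝ≥0∞ := upperPot n (minOnes P) (maxOnes P)

variable {a a' b b' : ℕ}

@[simp] lemma lowerPot_zero_left (n b : ℕ) : lowerPot n 0 b = 0 := by simp [lowerPot]

lemma lowerPot_mono (ha : a ≤ a') (hb : b ≤ b') : lowerPot n a b ≤ lowerPot n a' b' := by
  unfold lowerPot
  apply mul_le_mul_right
  calc ∑ i ∈ Finset.Icc 1 a, ((b + 1 - i : ℕ) : ℝ≥0∞) / i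
      ≤ ∑ i ∈ Finset.Icc 1 a, ((b' + 1 - i : ℕ) : ℝ≥0∞) / i := by gcongr
    _ ≤ _ := Finset.sum_le_sum_of_subset (Finset.Icc_subset_Icc_right ha)

lemma lowerPot_succ (n a b : ℕ) :
    lowerPot n (a + 1) b = lowerPot n a b + n * ((b - a : ℕ) / (a + 1 : ℕ)) := by
  rw [lowerPot, lowerPot, Finset.sum_Icc_succ_top (by omega), mul_add,
    show b + 1 - (a + 1) = b - a by omega]

lemma lowerPot_ne_top (n a b : ℕ) : lowerPot n a b ≠ ⊤ := by
  refine ENNReal.mul_ne_top (ENNReal.natCast_ne_top n) (ENNReal.sum_ne_top.mpr fun i hi => ?_)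
  exact ENNReal.div_ne_top (ENNReal.natCast_ne_top _)
    (Nat.cast_ne_zero.mpr (Nat.one_le_iff_ne_zero.mp (Finset.mem_Icc.mp hi).1))

lemma upperPot_anti (ha : a' ≤ a) (hb : b ≤ b') : upperPot n a' b' ≤ upperPot n a b := by
  unfold upperPot
  gcongr

lemma upperPot_succ_left (n a b : ℕ) :
    upperPot n (a + 1) b =
      upperPot n a b + ((n * (n + 1) : ℕ) : ℝ≥0∞) * ((a + 1 : ℕ) : ℝ≥0∞)⁻¹ := by
  rw [upperPot, upperPot, Finset.sum_Icc_succ_top (by omega)]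
  ring

lemma upperPot_of_lt (hb : b < n) :
    upperPot n a b =
      upperPot n a (b + 1) +
        ((n * (n + 1) : ℕ) : ℝ≥0∞) * ((n - b : ℕ) : ℝ≥0∞)⁻¹ := by
  rw [upperPot, upperPot, show n - b = n - (b + 1) + 1 by omega,
    Finset.sum_Icc_succ_top (by omega), show n - (b + 1) + 1 = n - b by omega]
  ring

lemma upperPot_le (ha : a ≤ n) :
    upperPot n a b ≤
      ((n * (n + 1) : ℕ) : ℝ≥0∞) *
        (2 * ∑ i ∈ Finset.Icc 1 n, (i : ℝ≥0∞)⁻¹) := by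
  unfold upperPot
  rw [two_mul (α := ℝ≥0∞)]
  gcongr
  exact Nat.sub_le n b

end Potentials

section Drift

variable (hn : 0 < n) {P : Finset (BitString n)} {a b : ℕ}

lemma card_moves (P : Finset (BitString n)) : (moves P).card = P.card * n := by
  simp [moves]

lemma sum_moves_ite_eq {x₀ : BitString n} (hx₀ : x₀ ∈ P) (c : Bool) (δ : ℝ≥0∞) :
    ∑ p ∈ moves P, (if p.1 = x₀ ∧ p.1 p.2 = c then δ else 0) =
      (Finset.univ.filter fun i => x₀ i = c).card * δ := by
  rw [moves, Finset.sum_product, Finset.sum_eq_single_of_mem x₀ hx₀ fun x _ hx => by simp [hx]]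
  simp [Finset.sum_ite]

include hn in
lemma moves_nonempty (hP : P.Nonempty) : (moves P).Nonempty :=
  hP.product ⟨⟨0, hn⟩, Finset.mem_univ _⟩

lemma lowerPotential_le (hP : IsOnesInterval P a b) : lowerPotential P ≤ lowerPot n n n := by
  rw [lowerPotential, hP.minOnes_eq, hP.maxOnes_eq]
  exact lowerPot_mono (hP.le.trans hP.le_n) hP.le_n

lemma lowerPotential_eq_zero (hP : IsOnesInterval P a b) (hcov : coversFront OneMinMax P) :
    lowerPotential P = 0 := by
  rw [lowerPotential, hP.minOnes_eq, (hP.coversFront_iff.mp hcov).1, lowerPot_zero_left]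

lemma lowerPotential_le_lexpect_step (hP : IsOnesInterval P a b) :
    lowerPotential P ≤
      (step OneMinMax uniformSelect (localMutation hn) P).lexpect lowerPotential + 1 := by
  rw [lexpect_step_uniformSelect_localMutation hn _ hP.nonempty, lowerPotential, hP.minOnes_eq,
    hP.maxOnes_eq]
  obtain _ | a := a
  · simp
  obtain ⟨x₀, hx₀, hx₀a⟩ := hP.exists_onesCount_eq (Finset.left_mem_Icc.mpr hP.le)
  set δ : ℝ≥0∞ := n * ((b - a : ℕ) / (a + 1 : ℕ))
  refine le_inv_card_mul_sum_add_one (moves_nonempty hn hP.nonempty)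
    (w := fun p : BitString n × Fin n => if p.1 = x₀ ∧ p.1 p.2 = true then δ else 0)
    (fun ⟨x, i⟩ hp => ?_) ?_
  · have hx : x ∈ P := (Finset.mem_product.mp hp).1
    have hQ := hP.updatePop_flipBit hx i
    have hxab := Finset.mem_Icc.mp (hP.onesCount_mem hx)
    rw [lowerPotential, hQ.minOnes_eq, hQ.maxOnes_eq]
    by_cases hgain : x = x₀ ∧ x i = true
    · obtain ⟨rfl, hxi⟩ := hgain
      have := onesCount_flipBit_of_true hxi
      rw [if_pos ⟨rfl, hxi⟩, show min (a + 1) (onesCount (flipBit x i)) = a by omega,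
        show max b (onesCount (flipBit x i)) = b by omega, lowerPot_succ]
    · rw [if_neg hgain, add_zero]
      refine lowerPot_mono ?_ (le_max_left _ _)
      cases hxi : x i
      · have := onesCount_flipBit_of_false hxi
        omega
      · have := onesCount_flipBit_of_true hxi
        have : onesCount x ≠ a + 1 := fun h =>
          hgain ⟨hP.injOn hx hx₀ (h.trans hx₀a.symm), hxi⟩
        omega
  · rw [sum_moves_ite_eq hx₀, card_moves, hP.card_eq, show b + 1 - (a + 1) = b - a by omega]
    change (onesCount x₀ : ℝ≥0∞) * δ ≤ _
    rw [hx₀a, mul_left_comm, ENNReal.mul_div_cancel (by simp) (ENNReal.natCast_ne_top _),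
      Nat.cast_mul, mul_comm]

lemma upperPotential_updatePop_flipBit_le (hP : IsOnesInterval P a b) {x : BitString n}
    (hx : x ∈ P) (i : Fin n) :
    upperPotential (updatePop OneMinMax P (flipBit x i)) ≤ upperPot n a b := by
  have hQ := hP.updatePop_flipBit hx i
  rw [upperPotential, hQ.minOnes_eq, hQ.maxOnes_eq]
  exact upperPot_anti (min_le_left _ _) (le_max_left _ _)

lemma lexpect_step_upperPotential_le (hP : IsOnesInterval P a b) :
    (step OneMinMax uniformSelect (localMutation hn) P).lexpect upperPotential ≤
      upperPotential P := by
  refine PMF.lexpect_le_of_le fun Q hQ => ?_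
  obtain ⟨x, hx, i, rfl⟩ := exists_eq_updatePop_of_mem_support_step hn _ hP.nonempty hQ
  exact (upperPotential_updatePop_flipBit_le hP hx i).trans_eq
    (by rw [upperPotential, hP.minOnes_eq, hP.maxOnes_eq])

/-- `n (n + 1)` bounds the number of moves, as the population has at most `n + 1` points. -/
lemma lexpect_step_upperPotential_add_one_le_of_gain (hP : IsOnesInterval P a b)
    {x₀ : BitString n} (hx₀ : x₀ ∈ P) {c : Bool} {δ : ℝ≥0∞}
    (hδ : ((n * (n + 1) : ℕ) : ℝ≥0∞) ≤
      (Finset.univ.filter fun i => x₀ i = c).card * δ)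
    (hgain : ∀ i, x₀ i = c →
      upperPotential (updatePop OneMinMax P (flipBit x₀ i)) + δ ≤ upperPot n a b) :
    (step OneMinMax uniformSelect (localMutation hn) P).lexpect upperPotential + 1 ≤
      upperPotential P := by
  rw [lexpect_step_uniformSelect_localMutation hn _ hP.nonempty, upperPotential, hP.minOnes_eq,
    hP.maxOnes_eq]
  refine inv_card_mul_sum_add_one_le (moves_nonempty hn hP.nonempty)
    (w := fun p : BitString n × Fin n => if p.1 = x₀ ∧ p.1 p.2 = c then δ else 0)
    (fun ⟨x, i⟩ hp => ?_) ?_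
  · by_cases h : x = x₀ ∧ x i = c
    · obtain ⟨rfl, hxi⟩ := h
      simpa [hxi] using hgain i hxi
    · rw [if_neg h, add_zero]
      exact upperPotential_updatePop_flipBit_le hP (Finset.mem_product.mp hp).1 i
  · rw [sum_moves_ite_eq hx₀, card_moves, hP.card_eq]
    refine le_trans ?_ hδ
    have := hP.le_n
    exact_mod_cast (Nat.mul_le_mul_right n (by omega : b + 1 - a ≤ n + 1)).trans_eq (mul_comm _ _)

lemma lexpect_step_upperPotential_add_one_le (hP : IsOnesInterval P a b)
    (hcov : ¬ coversFront OneMinMax P) :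
    (step OneMinMax uniformSelect (localMutation hn) P).lexpect upperPotential + 1 ≤
      upperPotential P := by
  rw [hP.coversFront_iff] at hcov
  obtain _ | a := a
  · have hb : b < n := lt_of_le_of_ne hP.le_n fun h => hcov ⟨rfl, h⟩
    obtain ⟨x₀, hx₀, hx₀b⟩ := hP.exists_onesCount_eq (Finset.right_mem_Icc.mpr hP.le)
    have hzeros : (Finset.univ.filter fun i => x₀ i = false).card = n - b := by
      have := onesCount_add_card_false x₀
      omega
    refine lexpect_step_upperPotential_add_one_le_of_gain hn hP hx₀ (c := false)
      (δ := ((n * (n + 1) : ℕ) : ℝ≥0∞) * ((n - b : ℕ) : ℝ≥0∞)⁻¹) ?_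
      fun i hi => ?_
    · rw [hzeros, mul_left_comm,
        ENNReal.mul_inv_cancel (Nat.cast_ne_zero.mpr (by omega)) (ENNReal.natCast_ne_top _),
        mul_one]
    · have hQ := hP.updatePop_flipBit hx₀ i
      have := onesCount_flipBit_of_false hi
      rw [upperPotential, hQ.minOnes_eq, hQ.maxOnes_eq,
        show min 0 (onesCount (flipBit x₀ i)) = 0 by omega,
        show max b (onesCount (flipBit x₀ i)) = b + 1 by rw [this, hx₀b]; simp,
        upperPot_of_lt hb]
  · obtain ⟨x₀, hx₀, hx₀a⟩ := hP.exists_onesCount_eq (Finset.left_mem_Icc.mpr hP.le)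
    refine lexpect_step_upperPotential_add_one_le_of_gain hn hP hx₀ (c := true)
      (δ := ((n * (n + 1) : ℕ) : ℝ≥0∞) * ((a + 1 : ℕ) : ℝ≥0∞)⁻¹) ?_
      fun i hi => ?_
    · change _ ≤ (onesCount x₀ : ℝ≥0∞) * _
      rw [hx₀a, mul_left_comm, ENNReal.mul_inv_cancel (by simp) (ENNReal.natCast_ne_top _),
        mul_one]
    · have hQ := hP.updatePop_flipBit hx₀ i
      have := onesCount_flipBit_of_true hi
      have := hP.le
      rw [upperPotential, hQ.minOnes_eq, hQ.maxOnes_eq,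
        show min (a + 1) (onesCount (flipBit x₀ i)) = a by omega,
        show max b (onesCount (flipBit x₀ i)) = b by omega, upperPot_succ_left]

end Drift

section Analysis

variable {a b : ℕ}

lemma lexpect_initDist (F : Finset (BitString n) → ℝ≥0∞) :
    (initDist n).lexpect F = (2 ^ n : ℝ≥0∞)⁻¹ * ∑ x : BitString n, F {x} := by
  rw [initDist, PMF.lexpect_map, PMF.uniformOfFintype, PMF.lexpect_uniformOfFinset]
  simp [BitString]

lemma sum_onesCount : ∑ x : BitString n, (onesCount x : ℝ) = n * 2 ^ n / 2 := by
  have hcompl (x : BitString n) : (onesCount x : ℝ) = n - onesCount fun i => !x i := by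
    have h := congrArg (Nat.cast : ℕ → ℝ) (onesCount_add_card_false x)
    have : onesCount (fun i => !x i) = (Finset.univ.filter fun i => x i = false).card := by
      simp [onesCount]
    push_cast at h
    rw [this]
    linarith
  have h := Fintype.sum_bijective _ (Function.Involutive.bijective fun x => funext fun i =>
    Bool.not_not (x i)) _ (fun x : BitString n => (n : ℝ) - onesCount x) hcompl
  simp only [Finset.sum_sub_distrib, Finset.sum_const, Finset.card_univ, Fintype.card_fun,
    Fintype.card_bool, Fintype.card_fin, nsmul_eq_mul] at h
  push_cast at h
  linarith

lemma half_mul_log_half_le :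
    (n / 2 : ℝ) * Real.log (n / 2) ≤
      (2 ^ n : ℝ)⁻¹ * ∑ x : BitString n, (onesCount x : ℝ) * Real.log (onesCount x) := by
  have hcard : (Finset.univ : Finset (BitString n)).card = 2 ^ n := by simp [BitString]
  have h := Real.convexOn_mul_log.map_sum_le (t := Finset.univ) (w := fun _ => (2 ^ n : ℝ)⁻¹)
    (p := fun x : BitString n => (onesCount x : ℝ)) (fun _ _ => by positivity)
    (by simp [hcard]) (fun _ _ => Set.mem_Ici.mpr (Nat.cast_nonneg _))
  simp only [smul_eq_mul, ← Finset.mul_sum, sum_onesCount] at h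
  rwa [show (2 ^ n : ℝ)⁻¹ * (n * 2 ^ n / 2) = n / 2 by field_simp] at h

lemma sub_le_sum_div (k : ℕ) :
    (k : ℝ) * Real.log k - k ≤ ∑ i ∈ Finset.Icc 1 k, ((k + 1 - i : ℕ) : ℝ) / i := by
  have hlog : Real.log k ≤ ∑ i ∈ Finset.Icc 1 k, (i : ℝ)⁻¹ := by
    have h := log_add_one_le_harmonic k
    rw [harmonic_eq_sum_Icc] at h
    push_cast at h
    rcases k.eq_zero_or_pos with rfl | hk
    · simp
    exact (Real.log_le_log (by exact_mod_cast hk) (by linarith)).trans h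
  calc (k : ℝ) * Real.log k - k ≤ ∑ i ∈ Finset.Icc 1 k, ((k : ℝ) / i - 1) := by
        rw [Finset.sum_sub_distrib, Finset.sum_const, Nat.card_Icc]
        simp only [div_eq_mul_inv, ← Finset.mul_sum, Nat.add_sub_cancel, nsmul_eq_mul, mul_one]
        gcongr
    _ ≤ ∑ i ∈ Finset.Icc 1 k, ((k + 1 - i : ℕ) : ℝ) / i := by
        refine Finset.sum_le_sum fun i hi => ?_
        obtain ⟨hi1, hik⟩ := Finset.mem_Icc.mp hi
        have hi0 : (0 : ℝ) < i := by exact_mod_cast hi1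
        rw [Nat.cast_sub (by omega), div_sub_one hi0.ne']
        gcongr
        linarith

lemma ofReal_le_lowerPot_self (n k : ℕ) :
    ENNReal.ofReal (n * (k * Real.log k - k)) ≤ lowerPot n k k := by
  rw [lowerPot, ENNReal.ofReal_mul (Nat.cast_nonneg n), ENNReal.ofReal_natCast]
  gcongr
  calc ENNReal.ofReal (k * Real.log k - k)
      ≤ ENNReal.ofReal (∑ i ∈ Finset.Icc 1 k, ((k + 1 - i : ℕ) : ℝ) / i) :=
        ENNReal.ofReal_le_ofReal (sub_le_sum_div k)
    _ = ∑ i ∈ Finset.Icc 1 k, ((k + 1 - i : ℕ) : ℝ≥0∞) / i := by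
        rw [ENNReal.ofReal_sum_of_nonneg fun i _ => by positivity]
        refine Finset.sum_congr rfl fun i hi => ?_
        rw [ENNReal.ofReal_div_of_pos (by exact_mod_cast (Finset.mem_Icc.mp hi).1),
          ENNReal.ofReal_natCast, ENNReal.ofReal_natCast]

lemma sq_mul_log_half_sub_sq_le_average (hn : 0 < n) :
    (n : ℝ) ^ 2 * Real.log n / 2 - n ^ 2 ≤
      (2 ^ n : ℝ)⁻¹ * ∑ x : BitString n,
        (n : ℝ) * ((onesCount x : ℝ) * Real.log (onesCount x) - onesCount x) := by
  have hJ := half_mul_log_half_le (n := n)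
  rw [Real.log_div (by positivity) two_ne_zero] at hJ
  -- the constant `c = 1` works because `(1 + ln 2) / 2 ≤ 1`
  have hlog2 : Real.log 2 ≤ 1 := (Real.log_two_lt_d9.trans (by norm_num)).le
  rw [← Finset.mul_sum, Finset.sum_sub_distrib, sum_onesCount, mul_left_comm, mul_sub]
  have : (2 ^ n : ℝ)⁻¹ * (n * 2 ^ n / 2) = n / 2 := by field_simp
  rw [this]
  nlinarith [mul_le_mul_of_nonneg_left hJ (Nat.cast_nonneg n : (0 : ℝ) ≤ n),
    sq_nonneg (n : ℝ)]

lemma ofReal_le_lexpect_initDist_lowerPotential (hn : 0 < n) :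
    ENNReal.ofReal ((n : ℝ) ^ 2 * Real.log n / 2 - n ^ 2) ≤
      (initDist n).lexpect lowerPotential := by
  calc ENNReal.ofReal ((n : ℝ) ^ 2 * Real.log n / 2 - n ^ 2)
      ≤ ENNReal.ofReal ((2 ^ n : ℝ)⁻¹ * ∑ x : BitString n,
          (n : ℝ) * ((onesCount x : ℝ) * Real.log (onesCount x) - onesCount x)) :=
        ENNReal.ofReal_le_ofReal (sq_mul_log_half_sub_sq_le_average hn)
    _ ≤ (2 ^ n : ℝ≥0∞)⁻¹ * ∑ x : BitString n,
          ENNReal.ofReal (n * ((onesCount x : ℝ) * Real.log (onesCount x) - onesCount x)) := by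
        rw [ENNReal.ofReal_mul (by positivity), ENNReal.ofReal_inv_of_pos (by positivity),
          ENNReal.ofReal_pow zero_le_two, ENNReal.ofReal_ofNat]
        gcongr
        exact Finset.le_sum_of_subadditive _ ENNReal.ofReal_zero.le
          (fun _ _ => ENNReal.ofReal_add_le) _ _
    _ ≤ (2 ^ n : ℝ≥0∞)⁻¹ *
          ∑ x : BitString n, lowerPot n (onesCount x) (onesCount x) := by
        gcongr with x
        exact ofReal_le_lowerPot_self n _
    _ = (initDist n).lexpect lowerPotential := by
        simp [lexpect_initDist, lowerPotential, (isOnesInterval_singleton _).minOnes_eq,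
          (isOnesInterval_singleton _).maxOnes_eq]

lemma upperPot_le_ofReal (hn : 2 ≤ n) (ha : a ≤ n) :
    upperPot n a b ≤ ENNReal.ofReal (10 * n ^ 2 * Real.log n) := by
  have hH : ∑ i ∈ Finset.Icc 1 n, (i : ℝ≥0∞)⁻¹ = ENNReal.ofReal (harmonic n) := by
    rw [harmonic_eq_sum_Icc, Rat.cast_sum, ENNReal.ofReal_sum_of_nonneg fun i _ => by positivity]
    refine Finset.sum_congr rfl fun i hi => ?_
    rw [Rat.cast_inv, Rat.cast_natCast,
      ENNReal.ofReal_inv_of_pos (by exact_mod_cast (Finset.mem_Icc.mp hi).1),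
      ENNReal.ofReal_natCast]
  refine (upperPot_le ha).trans ?_
  rw [hH, ← ENNReal.ofReal_natCast, ← ENNReal.ofReal_ofNat 2,
    ← ENNReal.ofReal_mul zero_le_two,
    ← ENNReal.ofReal_mul (Nat.cast_nonneg _)]
  refine ENNReal.ofReal_le_ofReal ?_
  have hlog : Real.log 2 ≤ Real.log n := Real.log_le_log two_pos (by exact_mod_cast hn)
  have hlog2 := Real.log_two_gt_d9
  have hn' : (2 : ℝ) ≤ n := by exact_mod_cast hn
  have hharm := harmonic_le_one_add_log n
  -- `2 n (n + 1) H_n ≤ 3 n² (1 + ln n) ≤ 10 n² ln n`, as `ln n ≥ ln 2 > 3 / 7`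
  push_cast
  nlinarith [mul_nonneg (sq_nonneg (n : ℝ)) (by linarith : (0 : ℝ) ≤ 7 * Real.log n - 3),
    mul_nonneg (by linarith : (0 : ℝ) ≤ n) (by linarith : (0 : ℝ) ≤ Real.log n),
    mul_le_mul_of_nonneg_left hharm (by positivity : (0 : ℝ) ≤ 2 * n * (n + 1))]

lemma lexpect_initDist_upperPotential_le (hn : 2 ≤ n) :
    (initDist n).lexpect upperPotential ≤ ENNReal.ofReal (10 * n ^ 2 * Real.log n) := by
  refine PMF.lexpect_le_of_le fun P hP => ?_
  obtain ⟨a, b, hP⟩ := exists_isOnesInterval_of_mem_support_initDist hP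
  rw [upperPotential, hP.minOnes_eq, hP.maxOnes_eq]
  exact upperPot_le_ofReal hn (hP.le.trans hP.le_n)

end Analysis

/-- SEMO with uniform parent selection on OneMinMax needs expected time
at least `n² ln n / 2 − c·n²`, and (known upper bound) at most `O(n² log n)`;
together the expected runtime is `Θ(n² log n)`. -/
theorem semo_uniform_oneminmax_theta :
    ∃ c C : ℝ, 0 < c ∧ 0 < C ∧ ∀ n : ℕ, ∀ hn : 0 < n,
      (ENNReal.ofReal (((n : ℝ) ^ 2 * Real.log n) / 2 - c * (n : ℝ) ^ 2) ≤
        expectedRuntime (initDist n)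
          (step (OneMinMax (n := n)) uniformSelect (localMutation hn))
          (coversFront OneMinMax)) ∧
      (2 ≤ n →
        expectedRuntime (initDist n)
            (step (OneMinMax (n := n)) uniformSelect (localMutation hn))
            (coversFront OneMinMax) ≤
          ENNReal.ofReal (C * (n : ℝ) ^ 2 * Real.log n)) := by
  refine ⟨1, 10, one_pos, by norm_num, fun n hn => ⟨?_, fun hn2 => ?_⟩⟩
  · rw [one_mul]
    exact (ofReal_le_lexpect_initDist_lowerPotential hn).trans
      (lexpect_le_expectedRuntime_of_drift (fun _ => exists_isOnesInterval_of_mem_support_initDist)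
        (fun _ ⟨_, _, hP⟩ _ => exists_isOnesInterval_of_mem_support_step hn hP) lowerPotential
        (lowerPot_ne_top n n n) (fun _ ⟨_, _, hP⟩ => lowerPotential_le hP)
        (fun _ ⟨_, _, hP⟩ => lowerPotential_eq_zero hP)
        (fun _ ⟨_, _, hP⟩ _ => lowerPotential_le_lexpect_step hn hP))
  · exact (expectedRuntime_le_of_drift (fun _ => exists_isOnesInterval_of_mem_support_initDist)
      (fun _ ⟨_, _, hP⟩ _ => exists_isOnesInterval_of_mem_support_step hn hP) upperPotential
      (fun _ ⟨_, _, hP⟩ _ => lexpect_step_upperPotential_le hn hP)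
      (fun _ ⟨_, _, hP⟩ => lexpect_step_upperPotential_add_one_le hn hP)).trans
      (lexpect_initDist_upperPotential_le hn2)

end EMO
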